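/- arXiv:math/0309106 — 2 statements merged into one kernel-verified Lean document; each statement's English description precedes it below -/
import Mathlib

section
/- Let Γ be a group that has a torsion-free subgroup of finite index. Then every finite normal subgroup of Γ is contained in a maximal finite normal subgroup N of Γ, and the quotient Γ/N has no nontrivial finite normal subgroups. -/
/-!
The finite radical of a group, the join of all its finite normal subgroups, is a directed union of
finite subgroups, so it consists of elements of finite order and meets a torsion-free subgroup `Λ`
trivially. It therefore injects into `Γ ⧸ Λ`, and is finite when `Λ` has finite index. Since finite
normal subgroups of `Γ ⧸ N` pull back to finite normal subgroups of `Γ`, the quotient by the finite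
radical has no nontrivial finite normal subgroup.
-/

namespace Subgroup

variable {G : Type*} [Group G]

theorem isOfFinOrder_of_mem_of_finite {M : Subgroup G} (hM : (M : Set G).Finite) {g : G}
    (hg : g ∈ M) : IsOfFinOrder g :=
  have : Finite M := hM.to_subtype
  Submonoid.isOfFinOrder_coe.mpr (isOfFinOrder_of_finite (⟨g, hg⟩ : M))

theorem finite_of_disjoint_of_finiteIndex {H K : Subgroup G} [K.FiniteIndex] (h : Disjoint H K) :
    (H : Set G).Finite := by
  have hcard : K.relIndex H = Nat.card H := by
    rw [← inf_relIndex_right, inf_comm, h.eq_bot, relIndex_bot_left]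
  have : Finite H := Nat.finite_of_card_ne_zero (hcard ▸ isFiniteRelIndex_of_finiteIndex.relIndex_ne_zero)
  exact Set.toFinite (H : Set G)

theorem finite_sup_of_normal {H K : Subgroup G} [K.Normal] (hH : (H : Set G).Finite)
    (hK : (K : Set G).Finite) : ((H ⊔ K : Subgroup G) : Set G).Finite := by
  rw [mul_normal]
  exact hH.mul hK

theorem finite_preimage_mk {N : Subgroup G} [N.Normal] (hN : (N : Set G).Finite)
    {s : Set (G ⧸ N)} (hs : s.Finite) : (QuotientGroup.mk ⁻¹' s : Set G).Finite := by
  refine hs.preimage' fun q _ => ?_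
  obtain ⟨g, rfl⟩ := QuotientGroup.mk_surjective q
  rw [← Set.image_singleton, QuotientGroup.preimage_image_mk_eq_mul]
  exact (Set.finite_singleton g).mul hN

theorem eq_bot_of_normal_of_finite_of_forall_le {N : Subgroup G} [N.Normal]
    (hN : (N : Set G).Finite) (hmax : ∀ M : Subgroup G, M.Normal → (M : Set G).Finite → M ≤ N)
    {M : Subgroup (G ⧸ N)} (hM : M.Normal) (hMfin : (M : Set (G ⧸ N)).Finite) : M = ⊥ := by
  have hle : M.comap (QuotientGroup.mk' N) ≤ N := hmax _ (hM.comap _) (finite_preimage_mk hN hMfin)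
  refine eq_bot_iff.mpr fun x hx => ?_
  obtain ⟨g, rfl⟩ := QuotientGroup.mk_surjective x
  exact (QuotientGroup.eq_one_iff g).mpr (hle hx)

variable (G) in
def finiteRadical : Subgroup G :=
  sSup {M : Subgroup G | M.Normal ∧ (M : Set G).Finite}

instance finiteRadical_normal : (finiteRadical G).Normal :=
  sSup_normal _ fun _ hM => hM.1

theorem le_finiteRadical {M : Subgroup G} (hM : M.Normal) (hMfin : (M : Set G).Finite) :
    M ≤ finiteRadical G :=
  le_sSup ⟨hM, hMfin⟩

theorem directedOn_normal_finite :
    DirectedOn (· ≤ ·) {M : Subgroup G | M.Normal ∧ (M : Set G).Finite} := by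
  rintro M ⟨hM, hMfin⟩ K ⟨hK, hKfin⟩
  exact ⟨M ⊔ K, ⟨sup_normal M K, finite_sup_of_normal hMfin hKfin⟩, le_sup_left, le_sup_right⟩

theorem isOfFinOrder_of_mem_finiteRadical {g : G} (hg : g ∈ finiteRadical G) : IsOfFinOrder g := by
  have hne : {M : Subgroup G | M.Normal ∧ (M : Set G).Finite}.Nonempty :=
    ⟨⊥, normal_bot, by simp⟩
  obtain ⟨M, ⟨-, hMfin⟩, hgM⟩ := (mem_sSup_of_directedOn hne directedOn_normal_finite).mp hg
  exact isOfFinOrder_of_mem_of_finite hMfin hgM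

theorem finite_finiteRadical {Λ : Subgroup G} [Λ.FiniteIndex]
    (hΛfree : ∀ g : G, g ∈ Λ → IsOfFinOrder g → g = 1) : (finiteRadical G : Set G).Finite :=
  finite_of_disjoint_of_finiteIndex <| disjoint_def.mpr fun hg hgΛ =>
    hΛfree _ hgΛ (isOfFinOrder_of_mem_finiteRadical hg)

end Subgroup

open Subgroup in
theorem exists_maximal_finite_normal_subgroup {Γ : Type*} [Group Γ]
    (Λ : Subgroup Γ) (hΛfree : ∀ g : Γ, g ∈ Λ → IsOfFinOrder g → g = 1)
    (hΛ : Λ.FiniteIndex) :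
    ∃ (N : Subgroup Γ) (hN : N.Normal), (N : Set Γ).Finite ∧
      (∀ M : Subgroup Γ, M.Normal → (M : Set Γ).Finite → M ≤ N) ∧
      (letI := hN;
        ∀ M : Subgroup (Γ ⧸ N), M.Normal → (M : Set (Γ ⧸ N)).Finite → M = ⊥) := by
  have hfin : (finiteRadical Γ : Set Γ).Finite := finite_finiteRadical hΛfree
  have hmax : ∀ M : Subgroup Γ, M.Normal → (M : Set Γ).Finite → M ≤ finiteRadical Γ :=
    fun _ => le_finiteRadical
  exact ⟨finiteRadical Γ, inferInstance, hfin, hmax,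
    fun _ => eq_bot_of_normal_of_finite_of_forall_le hfin hmax⟩
end

section
/- Let X be a compact Hausdorff space and K ⊆ X ∖ Y a compact subset of the complement of a closed subset Y. Suppose a group Γ acts on X by homeomorphisms preserving Y, and suppose that for every y ∈ Y and every open neighborhood U of y there is an open neighborhood V ⊆ U of y such that for all g ∈ Γ, gK ∩ V ≠ ∅ implies gK ⊆ U. Then for every sequence (g_n) in Γ and points x_n, x'_n ∈ K, if (g_n x_n) converges to a point y ∈ Y, then (g_n x'_n) also converges to y. -/
theorem translates_converge_together {X Γ : Type*} [TopologicalSpace X]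
    [CompactSpace X] [T2Space X] [Group Γ] [MulAction Γ X]
    (hcont : ∀ g : Γ, Continuous fun x : X => g • x)
    (Y : Set X) (hYcl : IsClosed Y) (hYinv : ∀ g : Γ, (fun x : X => g • x) '' Y = Y)
    (K : Set X) (hK : IsCompact K) (hKY : K ⊆ Yᶜ)
    (hsmall : ∀ y ∈ Y, ∀ U : Set X, IsOpen U → y ∈ U →
      ∃ V : Set X, IsOpen V ∧ y ∈ V ∧ V ⊆ U ∧
        ∀ g : Γ, ((fun x : X => g • x) '' K ∩ V).Nonempty →
          (fun x : X => g • x) '' K ⊆ U)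
    (g : ℕ → Γ) (x x' : ℕ → X) (hx : ∀ n, x n ∈ K) (hx' : ∀ n, x' n ∈ K)
    (y : X) (hy : y ∈ Y)
    (hconv : Filter.Tendsto (fun n => g n • x n) Filter.atTop (nhds y)) :
    Filter.Tendsto (fun n => g n • x' n) Filter.atTop (nhds y) := by
  rw [tendsto_nhds] at hconv ⊢
  intro U hU hyU
  obtain ⟨V, hVo, hyV, hVU, hV⟩ := hsmall y hy U hU hyU
  filter_upwards [hconv V hVo hyV] with n hn
  exact hV (g n) ⟨g n • x n, ⟨x n, hx n, rfl⟩, hn⟩ ⟨x' n, hx' n, rfl⟩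
end
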